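/- arXiv:1303.5350 — 4 statements merged into one kernel-verified Lean document; each statement's English description precedes it below -/
import Mathlib

section
/- Let z : ZMod (2t) → ℤ satisfy |z(k+1) - z(k)| = 1 for all k and z(k+t) = t - z(k) for all k. Then the number of local minima of z (indices k with z(k-1) > z(k) and z(k+1) > z(k)) equals t - (1/4)·∑ₖ |z(k+1) - z(k-1)|. -/
/-- Number of local minima of a `2t`-periodic integer sequence. -/
def minimaCount (t : ℕ) (z : ZMod (2*t) → ℤ) : ℕ :=
  ((Finset.range (2*t)).filter (fun k : ℕ =>
    z ((k : ZMod (2*t)) - 1) > z (k : ZMod (2*t)) ∧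
    z ((k : ZMod (2*t)) + 1) > z (k : ZMod (2*t)))).card

/-!
Away from local extrema a ±1 walk moves monotonically through `k`, so
`|z (k + 1) - z (k - 1)| = 2`; at a local minimum or maximum it is `0`. Summing over the cycle,
`∑ₖ |z (k + 1) - z (k - 1)| = 2 · 2t - 2 (#minima + #maxima)`. The antipodal relation
`z (k + t) = t - z k` makes the shift `k ↦ k + t` carry minima onto maxima, so
`#minima = #maxima` and the formula follows.
-/

open Finset

theorem Finset.sum_range_natCast_zmod {M : Type*} [AddCommMonoid M] {n : ℕ} [NeZero n]
    (f : ZMod n → M) : ∑ k ∈ range n, f k = ∑ x, f x :=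
  sum_nbij' Nat.cast ZMod.val (by simp) (by simp [ZMod.val_lt])
    (fun _ hk ↦ ZMod.val_cast_of_lt (mem_range.1 hk)) (fun x _ ↦ ZMod.natCast_zmod_val x)
    (fun _ _ ↦ rfl)

theorem Int.abs_sub_eq_of_abs_sub_eq_one {a b c : ℤ} (hab : |b - a| = 1) (hbc : |c - b| = 1) :
    |c - a| = 2 - 2 * (if b < a ∧ b < c then 1 else 0) - 2 * (if a < b ∧ c < b then 1 else 0) := by
  rw [abs_eq zero_le_one] at hab hbc
  split_ifs <;> grind [abs_of_nonneg, abs_of_nonpos]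

section CyclicWalk

variable {R : Type*} [AddCommGroupWithOne R] [Fintype R]

def valleys (z : R → ℤ) : Finset R := univ.filter fun x ↦ z x < z (x - 1) ∧ z x < z (x + 1)

def peaks (z : R → ℤ) : Finset R := univ.filter fun x ↦ z (x - 1) < z x ∧ z (x + 1) < z x

theorem sum_abs_sub_eq_of_abs_sub_eq_one {z : R → ℤ} (hstep : ∀ x, |z (x + 1) - z x| = 1) :
    ∑ x, |z (x + 1) - z (x - 1)| = 2 * Fintype.card R - 2 * #(valleys z) - 2 * #(peaks z) := by
  have hpoint (x : R) := Int.abs_sub_eq_of_abs_sub_eq_one (by simpa using hstep (x - 1)) (hstep x)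
  simp only [valleys, peaks, natCast_card_filter, sum_congr rfl fun x _ ↦ hpoint x,
    sum_sub_distrib, ← mul_sum, sum_const, card_univ, nsmul_eq_mul]
  ring

theorem card_valleys_eq_card_peaks {z : R → ℤ} {s : R} {c : ℤ} (hant : ∀ x, z (x + s) = c - z x) :
    #(valleys z) = #(peaks z) := by
  refine card_equiv (Equiv.addRight s) fun x ↦ ?_
  have h₁ : x + s - 1 = x - 1 + s := by abel
  have h₂ : x + s + 1 = x + 1 + s := by abel
  simp only [valleys, peaks, mem_filter, mem_univ, true_and, Equiv.coe_addRight, h₁, h₂, hant]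
  omega

end CyclicWalk

theorem minimaCount_eq_card_valleys (t : ℕ) [NeZero t] (z : ZMod (2*t) → ℤ) :
    minimaCount t z = #(valleys z) := by
  rw [minimaCount, valleys, card_filter, card_filter, ← sum_range_natCast_zmod]

theorem minima_eq_abs_diff_general (t : ℕ) (z : ZMod (2*t) → ℤ)
    (hstep : ∀ k : ZMod (2*t), |z (k + 1) - z k| = 1)
    (hant : ∀ k : ZMod (2*t), z (k + (t : ZMod (2*t))) = (t : ℤ) - z k) :
    (minimaCount t z : ℝ) =
      (t : ℝ) - (1/4) * ∑ k ∈ Finset.range (2*t),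
        |(z ((k : ZMod (2*t)) + 1) : ℝ) - (z ((k : ZMod (2*t)) - 1) : ℝ)| := by
  rcases Nat.eq_zero_or_pos t with rfl | ht
  · simp [minimaCount]
  have : NeZero t := ⟨ht.ne'⟩
  have hcast : ∑ x, |(z (x + 1) : ℝ) - z (x - 1)| = ((∑ x, |z (x + 1) - z (x - 1)| : ℤ) : ℝ) := by
    push_cast; rfl
  rw [minimaCount_eq_card_valleys, sum_range_natCast_zmod fun x ↦ |(z (x + 1) : ℝ) - z (x - 1)|,
    hcast, sum_abs_sub_eq_of_abs_sub_eq_one hstep, ZMod.card, card_valleys_eq_card_peaks hant]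
  push_cast
  ring

theorem minima_eq_abs_diff (t : ℕ) (ht : 2 ≤ t) (z : ZMod (2*t) → ℤ)
    (hstep : ∀ k : ZMod (2*t), |z (k + 1) - z k| = 1)
    (hant : ∀ k : ZMod (2*t), z (k + (t : ZMod (2*t))) = (t : ℤ) - z k) :
    (minimaCount t z : ℝ) =
      (t : ℝ) - (1/4) * ∑ k ∈ Finset.range (2*t),
        |(z ((k : ZMod (2*t)) + 1) : ℝ) - (z ((k : ZMod (2*t)) - 1) : ℝ)| :=
  minima_eq_abs_diff_general t z hstep hant
end

section
/- Let z : ZMod (2t) → ℤ satisfy |z(k+1) - z(k)| = 1 and z(k+t) = t - z(k) for all k. Then the number of local minima of z equals t - (1/8)·∑ₖ (z(k+1) - z(k-1))². -/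
/-! With steps `±1`, the central difference `z (k + 1) - z (k - 1)` vanishes at a local extremum
and is `±2` elsewhere, while the second difference `z (k + 1) - 2 z k + z (k - 1)` is `2` at a local
minimum, `-2` at a local maximum and `0` elsewhere. Hence
`(z (k + 1) - z (k - 1))² + 8·[k is a local minimum] = 4 + 2·(z (k + 1) - 2 z k + z (k - 1))`,
and summing over the cycle the second differences telescope to zero. -/

open Finset

theorem sq_sub_add_eight_mul_ite {a b c : ℤ} (hab : |b - a| = 1) (hbc : |c - b| = 1) :
    (c - a) ^ 2 + 8 * (if b < a ∧ b < c then 1 else 0) = 4 + 2 * (a - 2 * b + c) := by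
  rcases abs_eq_abs.mp (hab.trans abs_one.symm) with hab | hab <;>
  rcases abs_eq_abs.mp (hbc.trans abs_one.symm) with hbc | hbc <;>
  · rw [show c - a = (b - a) + (c - b) by ring, hab, hbc]
    split_ifs <;> omega

namespace ZMod

variable {n : ℕ} [NeZero n]

theorem sum_range_natCast {M : Type*} [AddCommMonoid M] (f : ZMod n → M) :
    ∑ k ∈ range n, f k = ∑ k, f k :=
  sum_nbij' (↑) val (fun _ _ ↦ mem_univ _) (fun a _ ↦ mem_range.mpr a.val_lt)
    (fun _ ha ↦ val_natCast_of_lt (mem_range.mp ha)) (fun a _ ↦ natCast_zmod_val a)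
    (fun _ _ ↦ rfl)

theorem sum_add_one_sub_two_mul_add_sub_one (z : ZMod n → ℤ) :
    ∑ k, (z (k + 1) - 2 * z k + z (k - 1)) = 0 := by
  have hsucc := Equiv.sum_comp (Equiv.addRight (1 : ZMod n)) z
  have hpred := Equiv.sum_comp (Equiv.subRight (1 : ZMod n)) z
  simp only [Equiv.coe_addRight, Equiv.subRight_apply] at hsucc hpred
  rw [sum_add_distrib, sum_sub_distrib, ← mul_sum, hsucc, hpred]
  ring

def localMinima (z : ZMod n → ℤ) : Finset (ZMod n) :=
  {k | z k < z (k - 1) ∧ z k < z (k + 1)}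

theorem eight_mul_card_localMinima_add_sum_sq (z : ZMod n → ℤ)
    (hstep : ∀ k, |z (k + 1) - z k| = 1) :
    8 * (#(localMinima z) : ℤ) + ∑ k, (z (k + 1) - z (k - 1)) ^ 2 = 4 * n := by
  have hlocal (k : ZMod n) :
      (z (k + 1) - z (k - 1)) ^ 2 + 8 * (if z k < z (k - 1) ∧ z k < z (k + 1) then 1 else 0)
        = 4 + 2 * (z (k - 1) - 2 * z k + z (k + 1)) :=
    sq_sub_add_eight_mul_ite (by simpa using hstep (k - 1)) (hstep k)
  calc 8 * (#(localMinima z) : ℤ) + ∑ k, (z (k + 1) - z (k - 1)) ^ 2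
      = ∑ k, (4 + 2 * (z (k + 1) - 2 * z k + z (k - 1))) := by
        rw [localMinima, natCast_card_filter, mul_sum, ← sum_add_distrib]
        exact sum_congr rfl fun k _ ↦ by rw [add_comm, hlocal]; ring
    _ = 4 * n := by
        rw [sum_add_distrib, ← mul_sum, sum_add_one_sub_two_mul_add_sub_one, sum_const,
          card_univ, card, nsmul_eq_mul]
        ring

end ZMod

theorem minimaCount_eq_card_localMinima {t : ℕ} [NeZero (2 * t)] (z : ZMod (2 * t) → ℤ) :
    minimaCount t z = #(ZMod.localMinima z) := by
  rw [minimaCount, ZMod.localMinima, card_filter, card_filter, ← ZMod.sum_range_natCast]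

theorem minima_eq_sq_diff_general (t : ℕ) (z : ZMod (2*t) → ℤ)
    (hstep : ∀ k : ZMod (2*t), |z (k + 1) - z k| = 1) :
    (minimaCount t z : ℝ) =
      (t : ℝ) - (1/8) * ∑ k ∈ Finset.range (2*t),
        ((z ((k : ZMod (2*t)) + 1) : ℝ) - (z ((k : ZMod (2*t)) - 1) : ℝ))^2 := by
  rcases Nat.eq_zero_or_pos t with rfl | ht
  · simp [minimaCount]
  have : NeZero (2 * t) := ⟨by omega⟩
  have key := congrArg (Int.cast : ℤ → ℝ) (ZMod.eight_mul_card_localMinima_add_sum_sq z hstep)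
  push_cast at key
  rw [minimaCount_eq_card_localMinima,
    ZMod.sum_range_natCast fun k ↦ ((z (k + 1) : ℝ) - z (k - 1)) ^ 2]
  linarith

theorem minima_eq_sq_diff (t : ℕ) (ht : 2 ≤ t) (z : ZMod (2*t) → ℤ)
    (hstep : ∀ k : ZMod (2*t), |z (k + 1) - z k| = 1)
    (hant : ∀ k : ZMod (2*t), z (k + (t : ZMod (2*t))) = (t : ℤ) - z k) :
    (minimaCount t z : ℝ) =
      (t : ℝ) - (1/8) * ∑ k ∈ Finset.range (2*t),
        ((z ((k : ZMod (2*t)) + 1) : ℝ) - (z ((k : ZMod (2*t)) - 1) : ℝ))^2 :=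
  minima_eq_sq_diff_general t z hstep
end

section
/- Let z : ZMod (2t) → ℤ satisfy |z(k+1) - z(k)| = 1 and z(k+t) = t - z(k) for all k. Then the number of local minima of z equals t - (1/4)·∑ₖ (z(k)² - z(k-1)·z(k+1)). -/
open Finset

section Cyclic

variable {G : Type*} [AddCommGroup G]

theorem sum_sq_sub_mul_shift [Fintype G] {R : Type*} [CommRing R] (z : G → R) (a : G) :
    ∑ k, (z k ^ 2 - z (k - a) * z (k + a)) =
      ∑ k, (z (k + a) - z k) ^ 2 + ∑ k, (z k - z (k - a)) * (z (k + a) - z k) := by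
  have hshift : ∑ k, z (k + a) * (z (k + a) - z k) = ∑ k, z k * (z k - z (k - a)) :=
    Fintype.sum_equiv (Equiv.addRight a) _ _ fun k => by simp
  calc ∑ k, (z k ^ 2 - z (k - a) * z (k + a))
      = ∑ k, ((z (k + a) - z k) ^ 2 + (z k - z (k - a)) * (z (k + a) - z k) +
          (z k * (z k - z (k - a)) - z (k + a) * (z (k + a) - z k))) :=
        sum_congr rfl fun k _ => by ring
    _ = _ := by
        rw [sum_add_distrib, sum_add_distrib, sum_sub_distrib, hshift, sub_self, add_zero]

def IsValley (z : G → ℤ) (a k : G) : Prop := z (k - a) > z k ∧ z (k + a) > z k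

def IsPeak (z : G → ℤ) (a k : G) : Prop := z (k - a) < z k ∧ z (k + a) < z k

instance (z : G → ℤ) (a : G) : DecidablePred (IsValley z a) :=
  fun _ => inferInstanceAs (Decidable (_ ∧ _))

instance (z : G → ℤ) (a : G) : DecidablePred (IsPeak z a) :=
  fun _ => inferInstanceAs (Decidable (_ ∧ _))

variable {z : G → ℤ} {a : G}

theorem sub_mul_sub_eq_of_abs_sub_eq_one (hstep : ∀ k, |z (k + a) - z k| = 1) (k : G) :
    (z k - z (k - a)) * (z (k + a) - z k) =
      1 - 2 * ((if IsValley z a k then 1 else 0) + (if IsPeak z a k then 1 else 0)) := by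
  have hleft := hstep (k - a)
  rw [sub_add_cancel] at hleft
  unfold IsValley IsPeak
  rcases (abs_eq zero_le_one).1 hleft with h₁ | h₁ <;>
    rcases (abs_eq zero_le_one).1 (hstep k) with h₂ | h₂ <;>
    rw [h₁, h₂] <;> split_ifs <;> omega

theorem isPeak_add_iff {b : G} {c : ℤ} (hant : ∀ k, z (k + b) = c - z k) (k : G) :
    IsPeak z a (k + b) ↔ IsValley z a k := by
  unfold IsPeak IsValley
  rw [add_sub_right_comm, add_right_comm k b a, hant, hant, hant]
  omega

variable [Fintype G]

theorem sum_sq_sub_mul_eq_of_abs_sub_eq_one (hstep : ∀ k, |z (k + a) - z k| = 1) :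
    ∑ k, (z k ^ 2 - z (k - a) * z (k + a)) =
      2 * Fintype.card G - 2 * (#(univ.filter (IsValley z a)) + #(univ.filter (IsPeak z a))) := by
  have hsq : ∀ k, (z (k + a) - z k) ^ 2 = 1 := fun k => by rw [← sq_abs, hstep, one_pow]
  rw [sum_sq_sub_mul_shift, sum_congr rfl fun k _ => hsq k,
    sum_congr rfl fun k _ => sub_mul_sub_eq_of_abs_sub_eq_one hstep k, sum_sub_distrib,
    ← mul_sum, sum_add_distrib, sum_boole, sum_boole]
  simp only [sum_const, card_univ, nsmul_eq_mul, mul_one]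
  ring

theorem card_filter_isPeak_eq {b : G} {c : ℤ} (hant : ∀ k, z (k + b) = c - z k) :
    #(univ.filter (IsPeak z a)) = #(univ.filter (IsValley z a)) :=
  (card_equiv (Equiv.addRight b) fun k => by simp [isPeak_add_iff hant]).symm

end Cyclic

theorem ZMod.sum_range_natCast_s3 {n : ℕ} [NeZero n] {M : Type*} [AddCommMonoid M]
    (f : ZMod n → M) : ∑ i ∈ range n, f i = ∑ k, f k :=
  sum_nbij' (↑) ZMod.val (by simp) (by simp [ZMod.val_lt])
    (fun _ hi => ZMod.val_cast_of_lt (mem_range.1 hi)) (fun k _ => ZMod.natCast_zmod_val k)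
    fun _ _ => rfl

theorem minimaCount_eq_card_isValley {t : ℕ} [NeZero (2 * t)] (z : ZMod (2 * t) → ℤ) :
    minimaCount t z = #(univ.filter (IsValley z 1)) := by
  rw [minimaCount, card_filter, card_filter]
  exact ZMod.sum_range_natCast_s3 fun k => if IsValley z 1 k then 1 else 0

theorem minima_eq_sq_minus_prod_general (t : ℕ) (z : ZMod (2*t) → ℤ)
    (hstep : ∀ k : ZMod (2*t), |z (k + 1) - z k| = 1)
    (hant : ∀ k : ZMod (2*t), z (k + (t : ZMod (2*t))) = (t : ℤ) - z k) :
    (minimaCount t z : ℝ) =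
      (t : ℝ) - (1/4) * ∑ k ∈ Finset.range (2*t),
        ((z (k : ZMod (2*t)) : ℝ)^2 -
          (z ((k : ZMod (2*t)) - 1) : ℝ) * (z ((k : ZMod (2*t)) + 1) : ℝ)) := by
  obtain rfl | ht := Nat.eq_zero_or_pos t
  · simp [minimaCount]
  have : NeZero (2 * t) := ⟨by omega⟩
  have hsum := sum_sq_sub_mul_eq_of_abs_sub_eq_one hstep
  rw [card_filter_isPeak_eq hant, ZMod.card] at hsum
  rw [minimaCount_eq_card_isValley,
    ZMod.sum_range_natCast_s3 fun k => (z k : ℝ) ^ 2 - (z (k - 1) : ℝ) * (z (k + 1) : ℝ)]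
  have hsumℝ := congrArg (Int.cast : ℤ → ℝ) hsum
  push_cast at hsumℝ
  linarith

theorem minima_eq_sq_minus_prod (t : ℕ) (ht : 2 ≤ t) (z : ZMod (2*t) → ℤ)
    (hstep : ∀ k : ZMod (2*t), |z (k + 1) - z k| = 1)
    (hant : ∀ k : ZMod (2*t), z (k + (t : ZMod (2*t))) = (t : ℤ) - z k) :
    (minimaCount t z : ℝ) =
      (t : ℝ) - (1/4) * ∑ k ∈ Finset.range (2*t),
        ((z (k : ZMod (2*t)) : ℝ)^2 -
          (z ((k : ZMod (2*t)) - 1) : ℝ) * (z ((k : ZMod (2*t)) + 1) : ℝ)) :=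
  minima_eq_sq_minus_prod_general t z hstep hant
end

section
/- Let z : ZMod (2t) → ℂ satisfy z(j+t) = t - z(j) for all j. Then for every odd k with 0 ≤ k ≤ 2t-1, the DFT satisfies ẑ(k) = 2·( -t/(1 - exp(-πi·k/t)) + ∑_{j=0}^{t-1} z(j)·exp(-πi·k·j/t) ). -/
/-!
Write `x = exp(-πik/t)`, so that `ẑ(k) = ∑_{j<2t} z(j) xʲ`. For odd `k` we have `xᵗ = -1`, so the
antipodal relation folds the upper half of the sum onto the lower one:
`z(j+t) x^{j+t} = (z(j) - t) xʲ`. What remains is `t` times a geometric sum, and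
`∑_{j<t} xʲ = (1 - xᵗ)/(1 - x) = 2/(1 - x)`.
-/

/-- Discrete Fourier transform of a `2t`-periodic sequence,
using the primitive `2t`-th root of unity `exp(-πi/t)`. -/
noncomputable def dft (t : ℕ) (z : ZMod (2*t) → ℂ) (k : ℕ) : ℂ :=
  ∑ j ∈ Finset.range (2*t),
    z (j : ZMod (2*t)) * Complex.exp (-(Real.pi : ℂ) * Complex.I * k * j / t)

open Finset

theorem geom_sum_eq_of_pow_eq_neg_one {K : Type*} [Field K] {x : K} {n : ℕ}
    (hx : x ^ n = -1) (hx1 : x ≠ 1) : ∑ i ∈ range n, x ^ i = 2 / (1 - x) := by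
  rw [geom_sum_eq hx1, hx, div_eq_div_iff (sub_ne_zero.mpr hx1) (sub_ne_zero.mpr hx1.symm)]
  ring

theorem sum_range_two_mul_mul_pow_of_pow_eq_neg_one {R : Type*} [CommRing R] {x : R} {n : ℕ}
    (hx : x ^ n = -1) (c : R) (g : ℕ → R) (hg : ∀ j, g (n + j) = c - g j) :
    ∑ j ∈ range (2 * n), g j * x ^ j
      = 2 * ∑ j ∈ range n, g j * x ^ j - c * ∑ j ∈ range n, x ^ j := by
  have upper : ∑ j ∈ range n, g (n + j) * x ^ (n + j)
      = ∑ j ∈ range n, g j * x ^ j - c * ∑ j ∈ range n, x ^ j := by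
    simp only [hg, pow_add, hx, mul_sum, ← sum_sub_distrib]
    exact sum_congr rfl fun j _ => by ring
  rw [two_mul, sum_range_add, upper]
  ring

theorem Complex.exp_mul_nat_div_eq_pow (a : ℂ) (j t : ℕ) (ht : t ≠ 0) :
    Complex.exp (a * j / t) = Complex.exp (a / t) ^ j := by
  rw [← Complex.exp_nat_mul]
  congr 1
  field_simp

theorem Complex.exp_neg_pi_mul_I_mul_div_pow_of_odd {k : ℕ} (hk : Odd k) {t : ℕ} (ht : t ≠ 0) :
    Complex.exp (-(Real.pi : ℂ) * Complex.I * k / t) ^ t = -1 := by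
  rw [← Complex.exp_nat_mul, mul_div_cancel₀ _ (Nat.cast_ne_zero.mpr ht), neg_mul, neg_mul,
    Complex.exp_neg, mul_comm, Complex.exp_nat_mul, Complex.exp_pi_mul_I, hk.neg_one_pow]
  norm_num

theorem dft_odd_components (t : ℕ) (ht : 0 < t) (z : ZMod (2*t) → ℂ)
    (hant : ∀ j : ZMod (2*t), z (j + (t : ZMod (2*t))) = (t : ℂ) - z j) :
    ∀ k : ℕ, k ≤ 2*t - 1 → Odd k →
      dft t z k = 2 * (-(t : ℂ) / (1 - Complex.exp (-(Real.pi : ℂ) * Complex.I * k / t))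
        + ∑ j ∈ Finset.range t,
            z (j : ZMod (2*t)) * Complex.exp (-(Real.pi : ℂ) * Complex.I * k * j / t)) := by
  intro k _ hodd
  set x := Complex.exp (-(Real.pi : ℂ) * Complex.I * k / t)
  have hxt : x ^ t = -1 := Complex.exp_neg_pi_mul_I_mul_div_pow_of_odd hodd ht.ne'
  have hx1 : x ≠ 1 := fun h => by norm_num [h] at hxt
  have hpow (j : ℕ) : Complex.exp (-(Real.pi : ℂ) * Complex.I * k * j / t) = x ^ j :=
    Complex.exp_mul_nat_div_eq_pow _ _ _ ht.ne'
  have fold := sum_range_two_mul_mul_pow_of_pow_eq_neg_one hxt (t : ℂ)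
    (fun j => z (j : ZMod (2 * t))) fun j => by
      simpa only [Nat.cast_add, add_comm] using hant (j : ZMod (2 * t))
  simp only [dft, hpow]
  rw [fold, geom_sum_eq_of_pow_eq_neg_one hxt hx1]
  ring
end
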